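/- Let G be a group with finite generating set X and decidable word problem, and let H be a K-quasiconvex subgroup of G. Then the membership problem for H in G is decidable. -/

import Mathlib

/-- Evaluate a word over `X ∪ X⁻¹` (letters indexed by `Fin k`, with a sign bit)
in the group `G`, where `ρ : Fin k → G` lists the generators. -/
def evalWord {G : Type*} [Group G] {k : ℕ} (ρ : Fin k → G)
    (w : List (Fin k × Bool)) : G :=
  (w.map fun p => if p.2 then ρ p.1 else (ρ p.1)⁻¹).prod

/-- Word length of `g` with respect to the generating set `ρ`. -/
noncomputable def wl {G : Type*} [Group G] {k : ℕ} (ρ : Fin k → G) (g : G) : ℕ :=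
  sInf {n | ∃ w : List (Fin k × Bool), evalWord ρ w = g ∧ w.length = n}

/-- `ρ` is a generating set of `G`. -/
def Generates {G : Type*} [Group G] {k : ℕ} (ρ : Fin k → G) : Prop :=
  Subgroup.closure (Set.range ρ) = ⊤

/-- `w` is the label of a geodesic in the Cayley graph from `a` to `b`. -/
def IsGeodesicWord {G : Type*} [Group G] {k : ℕ} (ρ : Fin k → G)
    (a b : G) (w : List (Fin k × Bool)) : Prop :=
  evalWord ρ w = a⁻¹ * b ∧ w.length = wl ρ (a⁻¹ * b)

/-- `v` is a vertex on the path starting at `a` labeled by `w`. -/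
def VertexOn {G : Type*} [Group G] {k : ℕ} (ρ : Fin k → G)
    (a : G) (w : List (Fin k × Bool)) (v : G) : Prop :=
  ∃ i ≤ w.length, v = a * evalWord ρ (w.take i)

/-- `H` is `K`-quasiconvex: every vertex on a geodesic with endpoints in `H`
is within distance `K` of `H`. -/
def IsQuasiconvex {G : Type*} [Group G] {k : ℕ} (ρ : Fin k → G)
    (H : Subgroup G) (K : ℕ) : Prop :=
  ∀ a ∈ H, ∀ b ∈ H, ∀ w, IsGeodesicWord ρ a b w →
    ∀ v, VertexOn ρ a w v → ∃ h ∈ H, wl ρ (v⁻¹ * h) ≤ K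

/-- `G` is `δ`-hyperbolic: geodesic triangles are `δ`-thin. -/
def IsHyperbolic {G : Type*} [Group G] {k : ℕ} (ρ : Fin k → G) (δ : ℕ) : Prop :=
  ∀ a b c : G, ∀ wab wbc wac,
    IsGeodesicWord ρ a b wab → IsGeodesicWord ρ b c wbc → IsGeodesicWord ρ a c wac →
    ∀ v, VertexOn ρ a wab v →
      ∃ u, (VertexOn ρ b wbc u ∨ VertexOn ρ a wac u) ∧ wl ρ (v⁻¹ * u) ≤ δ

/-- The conjugate subgroup `g⁻¹ H g`. -/
def conjSub {G : Type*} [Group G] (g : G) (H : Subgroup G) : Subgroup G :=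
  Subgroup.map (MulAut.conj g⁻¹).toMonoidHom H

/-!
Let `u` be a geodesic word for `g ∈ H`. By quasiconvexity every vertex of `u` lies within `K`
of some `hᵢ ∈ H` (with `h₀ = 1` and the last one equal to `g`), so consecutive `hᵢ⁻¹ hᵢ₊₁`
are elements of `H` of length at most `2K + 1`. Hence every `g ∈ H` is a product of at most
`|g|` elements of the finite set `U` of words of length `≤ 2K + 1` representing elements
of `H`. Given `w`, the algorithm enumerates the products of at most `|w|` words of `U` and
asks the word-problem solver whether `w` equals one of them. The finite list `U` is hard-coded
into the algorithm; it is not computed from `H`.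
-/

theorem computable_list_any {α β : Type*} [Primcodable α] [Primcodable β] {f : α → List β}
    {p : α → β → Bool} (hf : Computable f) (hp : Computable₂ p) :
    Computable fun a => (f a).any (p a) := by
  have hstep : Computable₂ fun a (s : ℕ × Bool) =>
      s.2 || (((f a)[s.1]?).map (p a)).getD false :=
    Primrec.or.to_comp.comp (Computable.snd.comp .snd) <|
      Computable.option_getD (Computable.option_map
        (Computable.list_getElem?.comp (hf.comp .fst) (Computable.fst.comp .snd))
        (hp.comp (Computable.fst.comp .fst) .snd).to₂) (.const false)
  refine (Computable.nat_rec (Computable.list_length.comp hf) (.const false) hstep).of_eq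
    fun a => ?_
  suffices h : ∀ n, ((f a).take n).any (p a) =
      (Nat.rec false (fun n b => b || (((f a)[n]?).map (p a)).getD false) n : Bool) by
    rw [← h, List.take_length]
  intro n
  induction n with
  | zero => simp
  | succ n ih =>
    rw [List.take_add_one, List.any_append, ih]
    cases h : (f a)[n]? <;> simp [h]

section WordProducts

variable {β : Type*}

def wordProducts (U : List (List β)) : ℕ → List (List β)
  | 0 => [[]]
  | n + 1 => wordProducts U n ++ U.flatMap fun u => (wordProducts U n).map (u ++ ·)

lemma mem_wordProducts {U : List (List β)} {n : ℕ} {c : List β} :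
    c ∈ wordProducts U n ↔
      ∃ ws : List (List β), (∀ u ∈ ws, u ∈ U) ∧ ws.length ≤ n ∧ ws.flatten = c := by
  induction n generalizing c with
  | zero => simp [wordProducts, eq_comm]
  | succ n ih =>
    simp only [wordProducts, List.mem_append, List.mem_flatMap, List.mem_map, ih]
    constructor
    · rintro (⟨ws, hU, hlen, rfl⟩ | ⟨u, hu, _, ⟨ws, hU, hlen, rfl⟩, rfl⟩)
      · exact ⟨ws, hU, hlen.trans n.le_succ, rfl⟩
      · exact ⟨u :: ws, List.forall_mem_cons.2 ⟨hu, hU⟩, by simpa using hlen, rfl⟩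
    · rintro ⟨_ | ⟨u, ws⟩, hU, hlen, rfl⟩
      · exact .inl ⟨[], by simp⟩
      · exact .inr ⟨u, hU u (by simp), _, ⟨ws, fun v hv => hU v (by simp [hv]),
          by simpa using hlen, rfl⟩, rfl⟩

lemma primrec_wordProducts [Primcodable β] (U : List (List β)) : Primrec (wordProducts U) := by
  have hstep : Primrec fun c : List (List β) => c ++ U.flatMap fun u => c.map (u ++ ·) :=
    Primrec.list_append.comp .id <| Primrec.list_flatMap (.const U) <|
      (Primrec.list_map .fst (Primrec.list_append.comp (Primrec.snd.comp .fst) .snd).to₂).to₂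
  refine (Primrec.nat_rec₁ [[]] (hstep.comp .snd).to₂).of_eq fun n => ?_
  induction n with
  | zero => rfl
  | succ n ih => simp only [wordProducts, ← ih]

end WordProducts

section Words

variable {G : Type*} [Group G] {k : ℕ} (ρ : Fin k → G)

def invWord (w : List (Fin k × Bool)) : List (Fin k × Bool) :=
  (w.map fun p => (p.1, !p.2)).reverse

@[simp] lemma invWord_length (w : List (Fin k × Bool)) : (invWord w).length = w.length := by
  simp [invWord]

@[simp] lemma evalWord_append (w₁ w₂ : List (Fin k × Bool)) :
    evalWord ρ (w₁ ++ w₂) = evalWord ρ w₁ * evalWord ρ w₂ := by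
  simp [evalWord]

lemma evalWord_flatten (ws : List (List (Fin k × Bool))) :
    evalWord ρ ws.flatten = (ws.map (evalWord ρ)).prod := by
  induction ws with
  | nil => rfl
  | cons w ws ih => simp [ih]

@[simp] lemma evalWord_invWord (w : List (Fin k × Bool)) :
    evalWord ρ (invWord w) = (evalWord ρ w)⁻¹ := by
  induction w with
  | nil => simp [invWord, evalWord]
  | cons p w ih =>
    obtain ⟨i, _ | _⟩ := p <;> simp_all [invWord, evalWord]

lemma wl_le_length {g : G} {w : List (Fin k × Bool)} (hw : evalWord ρ w = g) :
    wl ρ g ≤ w.length :=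
  Nat.sInf_le ⟨w, hw, rfl⟩

@[simp] lemma wl_one : wl ρ (1 : G) = 0 :=
  Nat.le_zero.mp (wl_le_length ρ (w := []) rfl)

variable {ρ}

lemma exists_evalWord_eq (hgen : Generates ρ) (g : G) :
    ∃ w : List (Fin k × Bool), evalWord ρ w = g := by
  have hg : g ∈ Subgroup.closure (Set.range ρ) := hgen ▸ Subgroup.mem_top g
  induction hg using Subgroup.closure_induction with
  | mem _ hx =>
    obtain ⟨i, rfl⟩ := hx
    exact ⟨[(i, true)], by simp [evalWord]⟩
  | one => exact ⟨[], rfl⟩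
  | mul _ _ _ _ hx hy =>
    obtain ⟨w₁, rfl⟩ := hx
    obtain ⟨w₂, rfl⟩ := hy
    exact ⟨w₁ ++ w₂, evalWord_append ρ w₁ w₂⟩
  | inv _ _ hx =>
    obtain ⟨w, rfl⟩ := hx
    exact ⟨invWord w, evalWord_invWord ρ w⟩

lemma exists_evalWord_eq_length_eq_wl (hgen : Generates ρ) (g : G) :
    ∃ w : List (Fin k × Bool), evalWord ρ w = g ∧ w.length = wl ρ g := by
  obtain ⟨w, hw⟩ := exists_evalWord_eq hgen g
  exact Nat.sInf_mem (s := {n | ∃ w, evalWord ρ w = g ∧ w.length = n}) ⟨_, w, hw, rfl⟩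

lemma wl_mul_le (hgen : Generates ρ) (a b : G) : wl ρ (a * b) ≤ wl ρ a + wl ρ b := by
  obtain ⟨wa, rfl, hla⟩ := exists_evalWord_eq_length_eq_wl hgen a
  obtain ⟨wb, rfl, hlb⟩ := exists_evalWord_eq_length_eq_wl hgen b
  simpa [hla, hlb] using wl_le_length ρ (evalWord_append ρ wa wb)

lemma wl_inv (hgen : Generates ρ) (a : G) : wl ρ a⁻¹ = wl ρ a := by
  suffices h : ∀ b : G, wl ρ b⁻¹ ≤ wl ρ b from le_antisymm (h a) (by simpa using h a⁻¹)
  intro b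
  obtain ⟨w, rfl, hl⟩ := exists_evalWord_eq_length_eq_wl hgen b
  simpa [hl] using wl_le_length ρ (evalWord_invWord ρ w)

lemma wl_inv_mul_le (hgen : Generates ρ) (a b c : G) :
    wl ρ (a⁻¹ * c) ≤ wl ρ (a⁻¹ * b) + wl ρ (b⁻¹ * c) := by
  simpa [mul_assoc] using wl_mul_le hgen (a⁻¹ * b) (b⁻¹ * c)

lemma wl_inv_mul_comm (hgen : Generates ρ) (a b : G) : wl ρ (a⁻¹ * b) = wl ρ (b⁻¹ * a) := by
  rw [← wl_inv hgen, mul_inv_rev, inv_inv]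

lemma wl_inv_mul_evalWord_take_succ_le (w : List (Fin k × Bool)) (i : ℕ) :
    wl ρ ((evalWord ρ (w.take i))⁻¹ * evalWord ρ (w.take (i + 1))) ≤ 1 := by
  rw [List.take_add_one, evalWord_append, inv_mul_cancel_left]
  refine (wl_le_length ρ rfl).trans ?_
  cases w[i]? <;> simp

lemma primrec_invWord : Primrec (invWord (k := k)) :=
  Primrec.list_reverse.comp <| Primrec.list_map .id
    ((Primrec.fst.comp .snd).pair (Primrec.not.comp (Primrec.snd.comp .snd))).to₂

lemma exists_wordList_of_wl_le (hgen : Generates ρ) (H : Subgroup G) (L : ℕ) :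
    ∃ U : List (List (Fin k × Bool)), (∀ u ∈ U, evalWord ρ u ∈ H) ∧
      ∀ s ∈ H, wl ρ s ≤ L → ∃ u ∈ U, evalWord ρ u = s := by
  have hfin : {w : List (Fin k × Bool) | w.length ≤ L ∧ evalWord ρ w ∈ H}.Finite :=
    (List.finite_length_le _ L).subset fun _ hw => hw.1
  refine ⟨hfin.toFinset.toList, fun u hu => by simp_all, fun s hs hsL => ?_⟩
  obtain ⟨w, rfl, hw⟩ := exists_evalWord_eq_length_eq_wl hgen s
  exact ⟨w, by simp [hs, hw, hsL], rfl⟩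

lemma exists_flatten_eq_prod_of_forall_mem {U : List (List (Fin k × Bool))} {l : List G}
    (h : ∀ s ∈ l, ∃ u ∈ U, evalWord ρ u = s) :
    ∃ ws : List (List (Fin k × Bool)), (∀ u ∈ ws, u ∈ U) ∧ ws.length = l.length ∧
      evalWord ρ ws.flatten = l.prod := by
  induction l with
  | nil => exact ⟨[], by simp, rfl, rfl⟩
  | cons s l ih =>
    obtain ⟨u, hu, rfl⟩ := h s (by simp)
    obtain ⟨ws, hws, hlen, hprod⟩ := ih fun t ht => h t (by simp [ht])
    exact ⟨u :: ws, List.forall_mem_cons.2 ⟨hu, hws⟩, by simp [hlen], by simp [hprod]⟩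

end Words

section Quasiconvex

variable {G : Type*} [Group G] {k : ℕ} {ρ : Fin k → G} {H : Subgroup G} {K : ℕ}

lemma exists_near_vertices_of_isQuasiconvex (hqc : IsQuasiconvex ρ H K) {g : G} (hg : g ∈ H)
    {u : List (Fin k × Bool)} (hu : IsGeodesicWord ρ 1 g u) :
    ∃ h : ℕ → G, h 0 = 1 ∧ h u.length = g ∧
      ∀ i, h i ∈ H ∧ wl ρ ((evalWord ρ (u.take i))⁻¹ * h i) ≤ K := by
  have hvertex (i : ℕ) : VertexOn ρ 1 u (evalWord ρ (u.take i)) :=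
    ⟨min i u.length, min_le_right _ _, by rw [one_mul, ← List.take_eq_take_min]⟩
  choose near hnearH hnear using fun i => hqc 1 H.one_mem g hg u hu _ (hvertex i)
  have hu_eval : evalWord ρ u = g := by simpa using hu.1
  refine ⟨fun i => if i = 0 then 1 else if u.length ≤ i then g else near i, by simp, ?_,
    fun i => ?_⟩
  · simp only [le_refl, ite_true]
    split_ifs with h0
    · rw [← hu_eval, List.eq_nil_of_length_eq_zero h0]; rfl
    · rfl
  · dsimp only
    split_ifs with h0 hlen
    · simp [h0, H.one_mem, evalWord]
    · simp [List.take_of_length_le hlen, hu_eval, hg]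
    · exact ⟨hnearH i, hnear i⟩

theorem exists_list_prod_eq_of_isQuasiconvex (hgen : Generates ρ) (hqc : IsQuasiconvex ρ H K)
    {g : G} (hg : g ∈ H) :
    ∃ l : List G, (∀ s ∈ l, s ∈ H ∧ wl ρ s ≤ 2 * K + 1) ∧ l.length = wl ρ g ∧ l.prod = g := by
  obtain ⟨u, hu, hlen⟩ := exists_evalWord_eq_length_eq_wl hgen g
  obtain ⟨h, h0, hlast, hnear⟩ :=
    exists_near_vertices_of_isQuasiconvex hqc hg (u := u)
      ⟨by simpa using hu, by simpa using hlen⟩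
  refine ⟨(List.range u.length).map fun i => (h i)⁻¹ * h (i + 1), ?_, by simp [hlen], ?_⟩
  · simp only [List.mem_map, List.mem_range]
    rintro _ ⟨i, -, rfl⟩
    refine ⟨H.mul_mem (H.inv_mem (hnear i).1) (hnear (i + 1)).1, ?_⟩
    set v := fun j => evalWord ρ (u.take j)
    calc wl ρ ((h i)⁻¹ * h (i + 1))
        ≤ wl ρ ((h i)⁻¹ * v i) + (wl ρ ((v i)⁻¹ * v (i + 1)) +
            wl ρ ((v (i + 1))⁻¹ * h (i + 1))) :=
          (wl_inv_mul_le hgen _ (v i) _).trans (add_le_add_right (wl_inv_mul_le hgen _ _ _) _)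
      _ ≤ K + (1 + K) := by
        rw [wl_inv_mul_comm hgen]
        gcongr
        exacts [(hnear i).2, wl_inv_mul_evalWord_take_succ_le u i, (hnear (i + 1)).2]
      _ = 2 * K + 1 := by ring
  · simpa [h0, hlast] using List.prod_range_div' u.length fun i => (h i)⁻¹

end Quasiconvex

/-- The membership problem for a `K`-quasiconvex subgroup of a finitely generated
group with decidable word problem is decidable. -/
theorem membership_decidable_of_quasiconvex
    {G : Type*} [Group G] {k : ℕ} (ρ : Fin k → G) (hgen : Generates ρ)
    (hwp : ∃ f : List (Fin k × Bool) → Bool, Computable f ∧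
      ∀ w, f w = true ↔ evalWord ρ w = 1)
    (H : Subgroup G) (K : ℕ) (hqc : IsQuasiconvex ρ H K) :
    ∃ f : List (Fin k × Bool) → Bool, Computable f ∧
      ∀ w, f w = true ↔ evalWord ρ w ∈ H := by
  obtain ⟨f₀, hf₀, hwp⟩ := hwp
  obtain ⟨U, hUH, hU⟩ := exists_wordList_of_wl_le hgen H (2 * K + 1)
  refine ⟨fun w => (wordProducts U w.length).any fun c => f₀ (invWord w ++ c), ?_, fun w => ?_⟩
  · exact computable_list_any ((primrec_wordProducts U).comp .list_length).to_comp
      (hf₀.comp (Primrec.list_append.comp (primrec_invWord.comp .fst) .snd).to_comp).to₂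
  simp only [List.any_eq_true, hwp, evalWord_append, evalWord_invWord, inv_mul_eq_one,
    mem_wordProducts]
  constructor
  · rintro ⟨_, ⟨ws, hws, -, rfl⟩, hw⟩
    rw [hw, evalWord_flatten]
    exact H.list_prod_mem (by simpa using fun u hu => hUH u (hws u hu))
  · intro hw
    obtain ⟨l, hl, hlen, hprod⟩ := exists_list_prod_eq_of_isQuasiconvex hgen hqc hw
    obtain ⟨ws, hws, hwslen, hwsprod⟩ :=
      exists_flatten_eq_prod_of_forall_mem fun s hs => hU s (hl s hs).1 (hl s hs).2
    refine ⟨_, ⟨ws, hws, ?_, rfl⟩, by rw [hwsprod, hprod]⟩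
    exact hwslen ▸ hlen ▸ wl_le_length ρ rfl
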